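/- Let N ≥ 2 and d ≥ 2 be integers and V₀ > 0, ε > 0 reals. Let X¹,…,X^{d−1} be skew-Hermitian N×N complex matrices and X^d = diag(i a₁,…,i a_N) with a₁,…,a_N real, and suppose −(1/2)·Σ_{m,n=1}^{d} Tr([X^m, X^n]²) < V₀. Then for every pair 1 ≤ i < j ≤ N with |a_i − a_j| > ε, one has Σ_{n=1}^{d−1} |X^n_{ij}|² < V₀/(2ε²). -/

import Mathlib

/-!
For skew-Hermitian `C` one has `-Tr (C²) = ‖C‖²_F`, and commutators of skew-Hermitian matrices
are skew-Hermitian, so `V_B = ½ ∑_{m,n} ‖[Xᵐ, Xⁿ]‖²_F`. Keeping only the terms in which one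
index is `d` gives `V_B ≥ ∑_{n<d} ‖[X^d, Xⁿ]‖²_F`. As `X^d` is diagonal,
`[X^d, Xⁿ]ᵢⱼ = i (aᵢ - aⱼ) Xⁿᵢⱼ`, and the `(i, j)` and `(j, i)` entries together contribute
`2 (aᵢ - aⱼ)² |Xⁿᵢⱼ|² > 2 ε² |Xⁿᵢⱼ|²`.
-/

open Matrix

section FrobeniusNormSq

variable {m n : Type*} [Fintype m] [Fintype n]

noncomputable def frobeniusNormSq (C : Matrix m n ℂ) : ℝ :=
  ∑ i, ∑ j, Complex.normSq (C i j)

lemma frobeniusNormSq_nonneg (C : Matrix m n ℂ) : 0 ≤ frobeniusNormSq C :=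
  Finset.sum_nonneg fun _ _ => Finset.sum_nonneg fun _ _ => Complex.normSq_nonneg _

lemma frobeniusNormSq_neg (C : Matrix m n ℂ) : frobeniusNormSq (-C) = frobeniusNormSq C := by
  simp only [frobeniusNormSq, Matrix.neg_apply, Complex.normSq_neg]

end FrobeniusNormSq

section SkewHermitian

variable {n : Type*}

lemma apply_swap_of_conjTranspose_eq_neg {A : Matrix n n ℂ} (hA : Aᴴ = -A) (i j : n) :
    A j i = -star (A i j) := by
  have h := congrFun (congrFun hA j) i
  rw [conjTranspose_apply, Matrix.neg_apply] at h
  rw [h, neg_neg]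

lemma diagonal_I_mul_conjTranspose [DecidableEq n] (a : n → ℝ) :
    (diagonal fun i => Complex.I * (a i : ℂ))ᴴ = -diagonal fun i => Complex.I * (a i : ℂ) := by
  rw [diagonal_conjTranspose, diagonal_neg]
  congr 1
  ext i
  simp

variable [Fintype n]

lemma normSq_apply_add_normSq_apply_swap_le [DecidableEq n] {i j : n} (hij : i ≠ j)
    (C : Matrix n n ℂ) : Complex.normSq (C i j) + Complex.normSq (C j i) ≤ frobeniusNormSq C := by
  have hrow : ∀ p q, Complex.normSq (C p q) ≤ ∑ q', Complex.normSq (C p q') := fun p q =>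
    Finset.single_le_sum (fun q' _ => Complex.normSq_nonneg (C p q')) (Finset.mem_univ q)
  calc Complex.normSq (C i j) + Complex.normSq (C j i)
      ≤ ∑ q, Complex.normSq (C i q) + ∑ q, Complex.normSq (C j q) :=
        add_le_add (hrow i j) (hrow j i)
    _ = ∑ p ∈ {i, j}, ∑ q, Complex.normSq (C p q) :=
        (Finset.sum_pair (f := fun p => ∑ q, Complex.normSq (C p q)) hij).symm
    _ ≤ frobeniusNormSq C :=
        Finset.sum_le_sum_of_subset_of_nonneg (Finset.subset_univ _)
          fun _ _ _ => Finset.sum_nonneg fun _ _ => Complex.normSq_nonneg _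

lemma trace_mul_self_of_conjTranspose_eq_neg {C : Matrix n n ℂ} (hC : Cᴴ = -C) :
    trace (C * C) = -(frobeniusNormSq C : ℂ) := by
  simp only [trace, diag_apply, mul_apply, frobeniusNormSq, Complex.ofReal_sum,
    ← Finset.sum_neg_distrib]
  refine Finset.sum_congr rfl fun i _ => Finset.sum_congr rfl fun j _ => ?_
  rw [apply_swap_of_conjTranspose_eq_neg hC i j, mul_neg, Complex.star_def, Complex.mul_conj]

lemma commutator_conjTranspose_eq_neg {A B : Matrix n n ℂ} (hA : Aᴴ = -A) (hB : Bᴴ = -B) :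
    (A * B - B * A)ᴴ = -(A * B - B * A) := by
  simp [conjTranspose_sub, conjTranspose_mul, hA, hB]

variable [DecidableEq n]

lemma diagonal_commutator_apply (v : n → ℂ) (A : Matrix n n ℂ) (i j : n) :
    (diagonal v * A - A * diagonal v) i j = (v i - v j) * A i j := by
  simp only [Matrix.sub_apply, diagonal_mul, mul_diagonal]
  ring

lemma two_mul_normSq_sub_mul_normSq_le_frobeniusNormSq {A : Matrix n n ℂ} (hA : Aᴴ = -A)
    (v : n → ℂ) {i j : n} (hij : i ≠ j) :
    2 * Complex.normSq (v i - v j) * Complex.normSq (A i j)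
      ≤ frobeniusNormSq (diagonal v * A - A * diagonal v) := by
  have hpair := normSq_apply_add_normSq_apply_swap_le hij (diagonal v * A - A * diagonal v)
  have hswap : Complex.normSq (A j i) = Complex.normSq (A i j) := by
    rw [apply_swap_of_conjTranspose_eq_neg hA, Complex.normSq_neg, Complex.star_def,
      Complex.normSq_conj]
  rw [diagonal_commutator_apply, diagonal_commutator_apply, Complex.normSq_mul,
    Complex.normSq_mul, hswap, ← neg_sub (v i), Complex.normSq_neg] at hpair
  linarith

end SkewHermitian

lemma two_mul_sum_le_sum_sum {ι κ : Type*} [Fintype ι] [Fintype κ] [DecidableEq ι]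
    {f : ι → ι → ℝ} (hf : ∀ m n, 0 ≤ f m n) (hsymm : ∀ m n, f m n = f n m)
    (k : ι) {g : κ → ι} (hg : Function.Injective g) (hgk : ∀ c, g c ≠ k) :
    2 * ∑ c, f k (g c) ≤ ∑ m, ∑ n, f m n := by
  set s := Finset.univ.image g
  have hks : k ∉ s := by simpa [s] using hgk
  have hsum : ∀ h : ι → ℝ, ∑ c, h (g c) = ∑ m ∈ s, h m := fun h =>
    (Finset.sum_image fun _ _ _ _ hcd => hg hcd).symm
  have hrow : ∑ n ∈ s, f k n ≤ ∑ n, f k n :=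
    Finset.sum_le_sum_of_subset_of_nonneg (Finset.subset_univ _) fun n _ _ => hf k n
  have hcol : ∑ m ∈ s, f m k ≤ ∑ m ∈ s, ∑ n, f m n :=
    Finset.sum_le_sum fun m _ => Finset.single_le_sum (fun n _ => hf m n) (Finset.mem_univ k)
  calc 2 * ∑ c, f k (g c) = ∑ n ∈ s, f k n + ∑ m ∈ s, f m k := by
        simp only [hsum fun m => f k m, ← hsymm k, two_mul]
    _ ≤ ∑ n, f k n + ∑ m ∈ s, ∑ n, f m n := add_le_add hrow hcol
    _ = ∑ m ∈ insert k s, ∑ n, f m n := (Finset.sum_insert (f := fun m => ∑ n, f m n) hks).symm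
    _ ≤ ∑ m, ∑ n, f m n :=
        Finset.sum_le_sum_of_subset_of_nonneg (Finset.subset_univ _)
          fun m _ _ => Finset.sum_nonneg fun n _ => hf m n

section BosonicPotential

variable {ι n : Type*} [Fintype ι] [Fintype n]

noncomputable def bosonicPotential (X : ι → Matrix n n ℂ) : ℝ :=
  (-(1 / 2 : ℂ) * ∑ m, ∑ n, trace ((X m * X n - X n * X m) * (X m * X n - X n * X m))).re

lemma bosonicPotential_eq_half_sum_frobeniusNormSq {X : ι → Matrix n n ℂ}
    (hX : ∀ m, (X m)ᴴ = -X m) :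
    bosonicPotential X = 1 / 2 * ∑ m, ∑ n, frobeniusNormSq (X m * X n - X n * X m) := by
  simp only [bosonicPotential,
    trace_mul_self_of_conjTranspose_eq_neg (commutator_conjTranspose_eq_neg (hX _) (hX _))]
  simp only [Finset.sum_neg_distrib, neg_mul_neg, ← Complex.ofReal_sum]
  norm_num [Complex.mul_re]

theorem two_mul_normSq_sub_mul_sum_normSq_le_bosonicPotential {κ : Type*} [Fintype κ]
    [DecidableEq ι] [DecidableEq n] {X : ι → Matrix n n ℂ} (hX : ∀ m, (X m)ᴴ = -X m)
    {k : ι} {v : n → ℂ} (hk : X k = diagonal v) {g : κ → ι}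
    (hg : Function.Injective g) (hgk : ∀ c, g c ≠ k) {i j : n} (hij : i ≠ j) :
    2 * Complex.normSq (v i - v j) * ∑ c, Complex.normSq (X (g c) i j) ≤ bosonicPotential X := by
  have hsymm : ∀ m n, frobeniusNormSq (X m * X n - X n * X m)
      = frobeniusNormSq (X n * X m - X m * X n) := fun m n => by
    rw [← neg_sub, frobeniusNormSq_neg]
  calc 2 * Complex.normSq (v i - v j) * ∑ c, Complex.normSq (X (g c) i j)
      ≤ ∑ c, frobeniusNormSq (X k * X (g c) - X (g c) * X k) := by
        rw [Finset.mul_sum]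
        refine Finset.sum_le_sum fun c _ => ?_
        rw [hk]
        exact two_mul_normSq_sub_mul_normSq_le_frobeniusNormSq (hX (g c)) v hij
    _ ≤ 1 / 2 * ∑ m, ∑ n, frobeniusNormSq (X m * X n - X n * X m) := by
        have := two_mul_sum_le_sum_sum (fun m n => frobeniusNormSq_nonneg _) hsymm k hg hgk
        linarith
    _ = bosonicPotential X := (bosonicPotential_eq_half_sum_frobeniusNormSq hX).symm

end BosonicPotential

/-- On the valley `{V_B < V₀}`, with `X^d = diag(i a₁,…,i a_N)` diagonal
and `X¹,…,X^{d-1}` skew-Hermitian, every pair `i < j` with eigenvalue gap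
`|aᵢ - aⱼ| > ε` has off-diagonal components bounded by `∑_n |Xⁿᵢⱼ|² < V₀/(2ε²)`. -/
theorem valley_off_diagonal_bound
    (N d : ℕ) (hd : 2 ≤ d) (V₀ ε : ℝ) (hε : 0 < ε)
    (X : Fin d → Matrix (Fin N) (Fin N) ℂ) (a : Fin N → ℝ)
    (hskew : ∀ n : Fin (d - 1), (X (Fin.castLE (Nat.sub_le d 1) n))ᴴ
      = -(X (Fin.castLE (Nat.sub_le d 1) n)))
    (hdiag : X ⟨d - 1, by omega⟩ = Matrix.diagonal fun i => Complex.I * (a i : ℂ))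
    (hvalley : (-(1 / 2 : ℂ) * ∑ m : Fin d, ∑ n : Fin d,
        Matrix.trace ((X m * X n - X n * X m) * (X m * X n - X n * X m))).re < V₀) :
    ∀ i j : Fin N, i < j → ε < |a i - a j| →
      ∑ n : Fin (d - 1), Complex.normSq (X (Fin.castLE (Nat.sub_le d 1) n) i j)
        < V₀ / (2 * ε ^ 2) := by
  intro i j hij hgap
  have hX : ∀ m, (X m)ᴴ = -X m := fun m => by
    rcases (Nat.le_sub_one_of_lt m.isLt).lt_or_eq with hm | hm
    · exact hskew ⟨m, hm⟩
    · rw [show m = ⟨d - 1, by omega⟩ from Fin.ext hm, hdiag]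
      exact diagonal_I_mul_conjTranspose a
  have hbound := two_mul_normSq_sub_mul_sum_normSq_le_bosonicPotential hX hdiag
    (Fin.castLE_injective (Nat.sub_le d 1)) (fun c : Fin (d - 1) => Fin.ne_of_lt c.isLt) hij.ne
  have hgap_sq : ε ^ 2 < Complex.normSq (Complex.I * a i - Complex.I * a j) := by
    rw [← mul_sub, ← Complex.ofReal_sub, Complex.normSq_mul, Complex.normSq_I,
      Complex.normSq_ofReal, one_mul, ← sq, ← sq_abs (a i - a j)]
    exact pow_lt_pow_left₀ hgap hε.le two_ne_zero
  have hsum_nonneg := Finset.sum_nonneg fun c (_ : c ∈ Finset.univ) =>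
    Complex.normSq_nonneg (X (Fin.castLE (Nat.sub_le d 1) c) i j)
  rw [lt_div_iff₀ (by positivity)]
  calc _ ≤ 2 * Complex.normSq (Complex.I * a i - Complex.I * a j)
        * ∑ c, Complex.normSq (X (Fin.castLE (Nat.sub_le d 1) c) i j) := by nlinarith
    _ ≤ bosonicPotential X := hbound
    _ < V₀ := hvalley
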